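/- arXiv:2305.00372 — 2 statements merged into one kernel-verified Lean document; each statement's English description precedes it below -/
import Mathlib

section
/- If X is a well-filtered space, then its Smyth power space P_S(X) is well-filtered, and in particular a monotone convergence space whose specialization order (reverse inclusion) makes Q(X) a dcpo with directed suprema given by filtered intersections. -/
open Set TopologicalSpace

universe u

section OrderDefs

variable {X : Type u}

/-- `U` is an upper set with respect to the relation `le`. -/
def IsUpperSetWrt (le : X → X → Prop) (U : Set X) : Prop :=
  ∀ ⦃x⦄, x ∈ U → ∀ ⦃y⦄, le x y → y ∈ U

/-- `s` is an upper bound of `D` with respect to `le`. -/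
def IsUBWrt (le : X → X → Prop) (D : Set X) (s : X) : Prop := ∀ d ∈ D, le d s

/-- `s` is a least upper bound (supremum) of `D` with respect to `le`. -/
def IsSupWrt (le : X → X → Prop) (D : Set X) (s : X) : Prop :=
  IsUBWrt le D s ∧ ∀ t, IsUBWrt le D t → le s t

/-- `D` is a (nonempty) directed subset with respect to `le`. -/
def DirectedSubset (le : X → X → Prop) (D : Set X) : Prop :=
  D.Nonempty ∧ ∀ a ∈ D, ∀ b ∈ D, ∃ c ∈ D, le a c ∧ le b c

/-- `U` is Scott open with respect to `le`: an upper set inaccessible by directed suprema. -/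
def ScottOpenWrt (le : X → X → Prop) (U : Set X) : Prop :=
  IsUpperSetWrt le U ∧
    ∀ D, DirectedSubset le D → ∀ s, IsSupWrt le D s → s ∈ U → (D ∩ U).Nonempty

/-- The Scott topology determined by the relation `le`. -/
def scottTop (le : X → X → Prop) : TopologicalSpace X where
  IsOpen := ScottOpenWrt le
  isOpen_univ := by
    refine ⟨fun x _ y _ => trivial, fun D hD s _ _ => ?_⟩
    obtain ⟨d, hd⟩ := hD.1
    exact ⟨d, hd, trivial⟩
  isOpen_inter := by
    rintro U V ⟨hUup, hUd⟩ ⟨hVup, hVd⟩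
    refine ⟨fun x hx y hxy => ⟨hUup hx.1 hxy, hVup hx.2 hxy⟩, ?_⟩
    rintro D hD s hs ⟨hsU, hsV⟩
    obtain ⟨a, haD, haU⟩ := hUd D hD s hs hsU
    obtain ⟨b, hbD, hbV⟩ := hVd D hD s hs hsV
    obtain ⟨c, hcD, hac, hbc⟩ := hD.2 a haD b hbD
    exact ⟨c, hcD, hUup haU hac, hVup hbV hbc⟩
  isOpen_sUnion := by
    intro S hS
    refine ⟨fun x hx y hxy => ?_, ?_⟩
    · obtain ⟨U, hU, hxU⟩ := hx
      exact ⟨U, hU, (hS U hU).1 hxU hxy⟩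
    · rintro D hD s hs ⟨U, hU, hsU⟩
      obtain ⟨d, hdD, hdU⟩ := (hS U hU).2 D hD s hs hsU
      exact ⟨d, hdD, U, hU, hdU⟩

end OrderDefs

section TopDefs

variable {X : Type u} [TopologicalSpace X]

/-- The specialization order of a topological space: `x ≤ y` iff `x ∈ cl {y}`. -/
def specLE (x y : X) : Prop := x ∈ closure ({y} : Set X)

/-- The upward closure of `A` in the specialization order. -/
def upSet (A : Set X) : Set X := {y | ∃ a ∈ A, specLE a y}

/-- `V` is way below `U`: every open cover of `U` admits a finite subfamily covering `V`. -/
def WayBelow (V U : Set X) : Prop :=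
  ∀ S : Set (Set X), (∀ W ∈ S, IsOpen W) → U ⊆ ⋃₀ S →
    ∃ F : Finset (Set X), ↑F ⊆ S ∧ V ⊆ ⋃₀ (F : Set (Set X))

/-- A space is core compact if its lattice of open sets is continuous, i.e. every open
set is the union of the open sets way below it. -/
def CoreCompact (X : Type u) [TopologicalSpace X] : Prop :=
  ∀ U : Set X, IsOpen U → ∀ x ∈ U, ∃ V : Set X, IsOpen V ∧ x ∈ V ∧ WayBelow V U

/-- `V` is open in the core compactly generated topology:
preimages under every continuous map from a core compact space are open. -/
def ccgOpen (X : Type u) [TopologicalSpace X] (V : Set X) : Prop :=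
  ∀ (C : Type u) (tC : TopologicalSpace C), CoreCompact C →
    ∀ ρ : C → X, Continuous ρ → IsOpen (ρ ⁻¹' V)

/-- The core compactly generated topology `𝒞X`. -/
def ccgTopology (X : Type u) [TopologicalSpace X] : TopologicalSpace X where
  IsOpen := ccgOpen X
  isOpen_univ := by intro C tC _ ρ hρ; simpa using isOpen_univ
  isOpen_inter := by
    intro U V hU hV C tC hc ρ hρ
    exact (hU C tC hc ρ hρ).inter (hV C tC hc ρ hρ)
  isOpen_sUnion := by
    intro S hS C tC hc ρ hρ
    rw [preimage_sUnion]
    exact isOpen_biUnion fun t ht => hS t ht C tC hc ρ hρ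

/-- A space is core compactly generated if its topology coincides with the
core compactly generated topology. -/
def CCGenerated (X : Type u) [t : TopologicalSpace X] : Prop := ccgTopology X = t

/-- A set is saturated if it is the intersection of the open sets containing it. -/
def Saturated (K : Set X) : Prop := K = ⋂₀ {U : Set X | IsOpen U ∧ K ⊆ U}

/-- A T₀ space is well-filtered if every filtered family of nonempty compact saturated sets
whose intersection is contained in an open set has a member contained in that open set. -/
def WellFiltered (X : Type u) [TopologicalSpace X] : Prop :=
  T0Space X ∧ ∀ 𝒦 : Set (Set X), 𝒦.Nonempty →
    (∀ K ∈ 𝒦, K.Nonempty ∧ IsCompact K ∧ Saturated K) →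
    (∀ K₁ ∈ 𝒦, ∀ K₂ ∈ 𝒦, ∃ K₃ ∈ 𝒦, K₃ ⊆ K₁ ∧ K₃ ⊆ K₂) →
    ∀ U : Set X, IsOpen U → ⋂₀ 𝒦 ⊆ U → ∃ K ∈ 𝒦, K ⊆ U

/-- A T₀ space is ω-well-filtered if the well-filteredness condition holds for
countable filtered families of nonempty compact saturated sets. -/
def OmegaWellFiltered (X : Type u) [TopologicalSpace X] : Prop :=
  T0Space X ∧ ∀ K : ℕ → Set X,
    (∀ n, (K n).Nonempty ∧ IsCompact (K n) ∧ Saturated (K n)) →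
    (∀ m n, ∃ k, K k ⊆ K m ∧ K k ⊆ K n) →
    ∀ U : Set X, IsOpen U → (⋂ n, K n) ⊆ U → ∃ n, K n ⊆ U

/-- A space is sober if it is T₀ and every irreducible closed set is the closure of a
(unique) point. -/
def SoberSpace (X : Type u) [TopologicalSpace X] : Prop :=
  T0Space X ∧ ∀ A : Set X, IsIrreducible A → IsClosed A → ∃! x : X, A = closure ({x} : Set X)

/-- A T₀ space is a monotone convergence space if the closure of every directed subset
(in the specialization order) is the closure of a point. -/
def MonotoneConvergenceSpace (X : Type u) [TopologicalSpace X] : Prop :=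
  T0Space X ∧ ∀ D : Set X, DirectedSubset specLE D → ∃ x : X, closure D = closure ({x} : Set X)

/-- The hull-kernel style topology on a family of subsets of `X`, generated by the sets
`U^s = {A | A ∩ U ≠ ∅}` for `U` open in `X`. -/
def hullTop (S : Set X → Prop) : TopologicalSpace {A : Set X // S A} :=
  generateFrom {s : Set {A : Set X // S A} |
    ∃ U : Set X, IsOpen U ∧ s = {A : {A : Set X // S A} | ((A : Set X) ∩ U).Nonempty}}

end TopDefs

/-- The nonempty compact saturated subsets of `X`. -/
abbrev QSet (X : Type u) [TopologicalSpace X] :=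
  {K : Set X // K.Nonempty ∧ IsCompact K ∧ Saturated K}

/-- The upper Vietoris topology on `Q(X)`, generated by the sets `☐U = {K : K ⊆ U}`. -/
def upperVietoris (X : Type u) [TopologicalSpace X] : TopologicalSpace (QSet X) :=
  generateFrom {s : Set (QSet X) |
    ∃ U : Set X, IsOpen U ∧ s = {K : QSet X | (K : Set X) ⊆ U}}

/-- Reverse inclusion, the specialization order of the Smyth power space. -/
def revIncl {X : Type u} [TopologicalSpace X] (K L : QSet X) : Prop :=
  (L : Set X) ⊆ (K : Set X)

/-!
Suppose a filtered family `𝒦` of compact saturated subsets of `P_S(X)` has `⋂ 𝒦 ⊆ 𝒰` with no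
member inside `𝒰`. By Zorn's lemma there is a closed set `𝒞 ⊆ Q(X) \ 𝒰` that is minimal among
closed sets meeting every member of `𝒦`. Applying well-filteredness of `X` to the sets
`↑((⋃ (𝒞 ∩ K)) \ V)`, minimality shows that every open `V ⊇ ⋂ 𝒞` contains a member of `𝒞`.
Hence `⋂ 𝒞` is compact saturated, belongs to the closed set `𝒞`, and lies above a member of
each `K ∈ 𝒦`, so it belongs to `⋂ 𝒦 ⊆ 𝒰`: a contradiction.
The same approximation property of filtered intersections, which holds in any well-filtered `X`,
gives the dcpo structure of `Q(X)` and the monotone convergence property.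
-/

section Saturation

variable {X : Type u} [TopologicalSpace X]

theorem IsOpen.mem_of_specLE {U : Set X} (hU : IsOpen U) {a b : X} (ha : a ∈ U)
    (h : specLE a b) : b ∈ U :=
  (specializes_iff_mem_closure.2 h).mem_open hU ha

theorem saturated_iff_forall_specLE {K : Set X} :
    Saturated K ↔ ∀ a ∈ K, ∀ b, specLE a b → b ∈ K := by
  constructor
  · intro hK a ha b h
    rw [hK]
    exact fun U hU => hU.1.mem_of_specLE (hU.2 ha) h
  · intro h
    refine subset_antisymm (fun x hx => mem_sInter.2 fun U hU => hU.2 hx) fun z hz => ?_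
    by_contra hzK
    have hK : K ⊆ (closure {z})ᶜ := fun a ha haz => hzK (h a ha z haz)
    exact mem_sInter.1 hz _ ⟨isClosed_closure.isOpen_compl, hK⟩ (subset_closure rfl)

theorem Saturated.mem_of_specLE {K : Set X} (hK : Saturated K) {a b : X} (ha : a ∈ K)
    (h : specLE a b) : b ∈ K :=
  saturated_iff_forall_specLE.1 hK a ha b h

theorem saturated_biInter {ι : Type*} {s : Set ι} {K : ι → Set X}
    (h : ∀ i ∈ s, Saturated (K i)) : Saturated (⋂ i ∈ s, K i) :=
  saturated_iff_forall_specLE.2 fun _ ha _ hab =>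
    mem_iInter₂.2 fun i hi => (h i hi).mem_of_specLE (mem_iInter₂.1 ha i hi) hab

theorem subset_upSet (A : Set X) : A ⊆ upSet A := fun a ha => ⟨a, ha, subset_closure rfl⟩

theorem upSet_mono {A B : Set X} (h : A ⊆ B) : upSet A ⊆ upSet B :=
  fun _ ⟨a, ha, hab⟩ => ⟨a, h ha, hab⟩

theorem IsOpen.upSet_subset {U A : Set X} (hU : IsOpen U) (hAU : A ⊆ U) : upSet A ⊆ U :=
  fun _ ⟨_, ha, hab⟩ => hU.mem_of_specLE (hAU ha) hab

theorem saturated_upSet (A : Set X) : Saturated (upSet A) :=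
  saturated_iff_forall_specLE.2 fun _ ⟨a, ha, hab⟩ _ hbc =>
    ⟨a, ha, closure_minimal (singleton_subset_iff.2 hbc) isClosed_closure hab⟩

theorem IsCompact.upSet {A : Set X} (h : IsCompact A) : IsCompact (upSet A) := by
  refine isCompact_of_finite_subcover fun W hW hcov => ?_
  obtain ⟨t, ht⟩ := h.elim_finite_subcover W hW ((subset_upSet A).trans hcov)
  exact ⟨t, (isOpen_biUnion fun i _ => hW i).upSet_subset ht⟩

end Saturation

section MinimalClosed

variable {Y : Type*} [TopologicalSpace Y]

theorem IsCompact.inter_sInter_nonempty_of_isChain {s : Set Y} (hs : IsCompact s)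
    {c : Set (Set Y)} (hch : IsChain (· ⊆ ·) c) (hcne : c.Nonempty)
    (hcl : ∀ t ∈ c, IsClosed t) (hst : ∀ t ∈ c, (s ∩ t).Nonempty) :
    (s ∩ ⋂₀ c).Nonempty := by
  have : Nonempty c := hcne.to_subtype
  have hch' : IsChain (· ⊇ ·) c := hch.symm
  rw [nonempty_iff_ne_empty, sInter_eq_iInter]
  intro h
  obtain ⟨t, ht⟩ := hs.elim_directed_family_closed (fun t : c => (t : Set Y))
    (fun t => hcl t t.2) h hch'.directedOn.directed_val
  exact (hst t t.2).ne_empty ht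

theorem exists_minimal_isClosed_inter_nonempty {𝒦 : Set (Set Y)}
    (h𝒦 : ∀ K ∈ 𝒦, IsCompact K) {A : Set Y} (hA : IsClosed A)
    (hA𝒦 : ∀ K ∈ 𝒦, (A ∩ K).Nonempty) :
    ∃ C ⊆ A, Minimal (fun C => IsClosed C ∧ ∀ K ∈ 𝒦, (C ∩ K).Nonempty) C := by
  refine zorn_superset_nonempty _ (fun c hcS hch hcne => ?_) A ⟨hA, hA𝒦⟩
  refine ⟨⋂₀ c, ⟨isClosed_sInter fun t ht => (hcS ht).1, fun K hK => ?_⟩,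
    fun t ht => sInter_subset_of_mem ht⟩
  rw [inter_comm]
  exact (h𝒦 K hK).inter_sInter_nonempty_of_isChain hch hcne (fun t ht => (hcS ht).1)
    fun t ht => by rw [inter_comm]; exact (hcS ht).2 K hK

end MinimalClosed

namespace QSet

variable {X : Type u} [TopologicalSpace X]

theorem biInter_mem {𝒟 : Set (QSet X)}
    (h : ∀ U, IsOpen U → ⋂ K ∈ 𝒟, (K : Set X) ⊆ U → ∃ K ∈ 𝒟, (K : Set X) ⊆ U) :
    (⋂ K ∈ 𝒟, (K : Set X)).Nonempty ∧ IsCompact (⋂ K ∈ 𝒟, (K : Set X)) ∧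
      Saturated (⋂ K ∈ 𝒟, (K : Set X)) := by
  refine ⟨nonempty_iff_ne_empty.2 fun he => ?_, ?_, saturated_biInter fun K _ => K.2.2.2⟩
  · obtain ⟨K, -, hK⟩ := h ∅ isOpen_empty he.subset
    exact K.2.1.ne_empty (subset_empty_iff.1 hK)
  · refine isCompact_of_finite_subcover fun W hW hcov => ?_
    obtain ⟨K, hK, hKW⟩ := h _ (isOpen_iUnion hW) hcov
    obtain ⟨t, ht⟩ := K.2.2.1.elim_finite_subcover W hW hKW
    exact ⟨t, (biInter_subset_of_mem hK).trans ht⟩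

def biInter (𝒟 : Set (QSet X))
    (h : ∀ U, IsOpen U → ⋂ K ∈ 𝒟, (K : Set X) ⊆ U → ∃ K ∈ 𝒟, (K : Set X) ⊆ U) : QSet X :=
  ⟨⋂ K ∈ 𝒟, (K : Set X), biInter_mem h⟩

def box (U : Set X) : Set (QSet X) := {K | (K : Set X) ⊆ U}

attribute [local instance] upperVietoris

theorem isOpen_box {U : Set X} (hU : IsOpen U) : IsOpen (box U) :=
  GenerateOpen.basic _ ⟨U, hU, rfl⟩

theorem exists_box_subset_of_isOpen {𝒰 : Set (QSet X)} (h𝒰 : IsOpen 𝒰) {K : QSet X}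
    (hK : K ∈ 𝒰) : ∃ U, IsOpen U ∧ (K : Set X) ⊆ U ∧ box U ⊆ 𝒰 := by
  induction h𝒰 generalizing K with
  | basic s hs =>
    obtain ⟨U, hU, rfl⟩ := hs
    exact ⟨U, hU, hK, subset_rfl⟩
  | univ => exact ⟨univ, isOpen_univ, subset_univ _, subset_univ _⟩
  | inter s t _ _ ihs iht =>
    obtain ⟨U₁, hU₁, hKU₁, hs⟩ := ihs hK.1
    obtain ⟨U₂, hU₂, hKU₂, ht⟩ := iht hK.2
    exact ⟨U₁ ∩ U₂, hU₁.inter hU₂, subset_inter hKU₁ hKU₂,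
      fun L hL => ⟨hs (hL.trans inter_subset_left), ht (hL.trans inter_subset_right)⟩⟩
  | sUnion S _ ih =>
    obtain ⟨s, hs, hKs⟩ := hK
    obtain ⟨U, hU, hKU, hUs⟩ := ih s hs hKs
    exact ⟨U, hU, hKU, fun L hL => ⟨s, hs, hUs hL⟩⟩

theorem specLE_iff (K L : QSet X) : specLE K L ↔ (L : Set X) ⊆ K := by
  constructor
  · intro h
    have hbox : ∀ U, IsOpen U → (K : Set X) ⊆ U → (L : Set X) ⊆ U := fun U hU hKU =>
      (isOpen_box hU).mem_of_specLE (a := K) hKU h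
    rw [K.2.2.2]
    exact fun x hx => mem_sInter.2 fun U hU => hbox U hU.1 hU.2 hx
  · intro h
    refine mem_closure_iff.2 fun 𝒰 h𝒰 hK𝒰 => ?_
    obtain ⟨U, hU, hKU, hU𝒰⟩ := exists_box_subset_of_isOpen h𝒰 hK𝒰
    exact ⟨L, hU𝒰 (h.trans hKU), rfl⟩

theorem t0Space : T0Space (QSet X) :=
  ⟨fun {K L} h => Subtype.ext <| subset_antisymm
    ((specLE_iff L K).1 (specializes_iff_mem_closure.1 h.specializes))
    ((specLE_iff K L).1 (specializes_iff_mem_closure.1 h.specializes'))⟩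

theorem directedSubset_specLE_iff {𝒟 : Set (QSet X)} :
    DirectedSubset specLE 𝒟 ↔ DirectedSubset revIncl 𝒟 := by
  simp only [DirectedSubset, specLE_iff, revIncl]

theorem isClosed_setOf_mem (z : X) : IsClosed {B : QSet X | z ∈ (B : Set X)} := by
  have h : {B : QSet X | z ∈ (B : Set X)}ᶜ = box (closure {z})ᶜ := by
    ext B
    refine ⟨fun hzB b hb hbz => hzB (B.2.2.2.mem_of_specLE hb hbz),
      fun hB hzB => hB hzB (subset_closure rfl)⟩
  rw [← isOpen_compl_iff, h]
  exact isOpen_box isClosed_closure.isOpen_compl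

theorem _root_.IsCompact.biUnion_coe {𝒜 : Set (QSet X)} (h : IsCompact 𝒜) :
    IsCompact (⋃ K ∈ 𝒜, (K : Set X)) := by
  classical
  refine isCompact_of_finite_subcover fun W hW hcov => ?_
  have h𝒜 : 𝒜 ⊆ ⋃ F : Finset _, box (⋃ i ∈ F, W i) := fun K hK =>
    mem_iUnion.2 (K.2.2.1.elim_finite_subcover W hW ((subset_biUnion_of_mem hK).trans hcov))
  obtain ⟨t, ht⟩ :=
    h.elim_finite_subcover _ (fun F => isOpen_box (isOpen_biUnion fun i _ => hW i)) h𝒜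
  refine ⟨t.sup id, fun x hx => ?_⟩
  obtain ⟨K, hK, hxK⟩ := mem_iUnion₂.1 hx
  obtain ⟨F, hFt, hKF⟩ := mem_iUnion₂.1 (ht hK)
  obtain ⟨i, hiF, hxi⟩ := mem_iUnion₂.1 (hKF hxK)
  exact mem_iUnion₂.2 ⟨i, Finset.le_sup (f := id) hFt hiF, hxi⟩

end QSet

namespace WellFiltered

open QSet

variable {X : Type u} [TopologicalSpace X]

theorem exists_subset_of_biInter_subset (hwf : WellFiltered X) {𝒟 : Set (QSet X)}
    (h𝒟 : DirectedSubset revIncl 𝒟) {U : Set X} (hU : IsOpen U)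
    (hsub : ⋂ K ∈ 𝒟, (K : Set X) ⊆ U) : ∃ K ∈ 𝒟, (K : Set X) ⊆ U := by
  obtain ⟨_, ⟨K, hK, rfl⟩, hKU⟩ := hwf.2 ((↑) '' 𝒟) (h𝒟.1.image _)
    (by rintro _ ⟨K, -, rfl⟩; exact K.2)
    (by
      rintro _ ⟨K₁, hK₁, rfl⟩ _ ⟨K₂, hK₂, rfl⟩
      obtain ⟨K₃, hK₃, h₁, h₂⟩ := h𝒟.2 K₁ hK₁ K₂ hK₂
      exact ⟨K₃, ⟨K₃, hK₃, rfl⟩, h₁, h₂⟩)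
    U hU (by rwa [sInter_image])
  exact ⟨K, hK, hKU⟩

theorem exists_isSupWrt_revIncl (hwf : WellFiltered X) {𝒟 : Set (QSet X)}
    (h𝒟 : DirectedSubset revIncl 𝒟) :
    ∃ s : QSet X, (s : Set X) = ⋂ K ∈ 𝒟, (K : Set X) ∧ IsSupWrt revIncl 𝒟 s :=
  ⟨biInter 𝒟 fun _ => hwf.exists_subset_of_biInter_subset h𝒟, rfl,
    fun _ hK => biInter_subset_of_mem hK, fun _ ht => subset_iInter₂ ht⟩

attribute [local instance] upperVietoris

theorem monotoneConvergenceSpace_upperVietoris (hwf : WellFiltered X) :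
    MonotoneConvergenceSpace (QSet X) := by
  refine ⟨t0Space, fun 𝒟 h𝒟 => ?_⟩
  rw [directedSubset_specLE_iff] at h𝒟
  obtain ⟨s, hs, hsup⟩ := hwf.exists_isSupWrt_revIncl h𝒟
  have hs𝒟 : s ∈ closure 𝒟 := mem_closure_iff.2 fun 𝒰 h𝒰 hs𝒰 => by
    obtain ⟨U, hU, hsU, hU𝒰⟩ := exists_box_subset_of_isOpen h𝒰 hs𝒰
    obtain ⟨K, hK, hKU⟩ := hwf.exists_subset_of_biInter_subset h𝒟 hU (hs ▸ hsU)
    exact ⟨K, hU𝒰 hKU, hK⟩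
  refine ⟨s, subset_antisymm (closure_minimal (fun K hK => ?_) isClosed_closure)
    (closure_minimal (singleton_subset_iff.2 hs𝒟) isClosed_closure)⟩
  exact (specLE_iff K s).2 (hsup.1 K hK)

theorem exists_subset_of_minimal (hwf : WellFiltered X) {𝒦 : Set (Set (QSet X))}
    (hne : 𝒦.Nonempty) (hcpt : ∀ K ∈ 𝒦, IsCompact K)
    (hfilt : ∀ K₁ ∈ 𝒦, ∀ K₂ ∈ 𝒦, ∃ K₃ ∈ 𝒦, K₃ ⊆ K₁ ∧ K₃ ⊆ K₂) {𝒞 : Set (QSet X)}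
    (h𝒞 : Minimal (fun C => IsClosed C ∧ ∀ K ∈ 𝒦, (C ∩ K).Nonempty) 𝒞) {V : Set X}
    (hV : IsOpen V) (hsub : ⋂ B ∈ 𝒞, (B : Set X) ⊆ V) : ∃ B ∈ 𝒞, (B : Set X) ⊆ V := by
  by_contra! hno
  set F : Set (QSet X) → Set X := fun K => upSet ((⋃ B ∈ 𝒞 ∩ K, (B : Set X)) \ V)
  have hF_not : ∀ K ∈ 𝒦, ∃ b ∈ F K, b ∉ V := fun K hK => by
    obtain ⟨B, hB⟩ := h𝒞.1.2 K hK
    obtain ⟨b, hbB, hbV⟩ := not_subset.1 (hno B hB.1)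
    exact ⟨b, subset_upSet _ ⟨mem_iUnion₂.2 ⟨B, hB, hbB⟩, hbV⟩, hbV⟩
  have hF : ∀ K ∈ 𝒦, (F K).Nonempty ∧ IsCompact (F K) ∧ Saturated (F K) := fun K hK =>
    ⟨(hF_not K hK).imp fun _ => And.left,
      (((hcpt K hK).inter_left h𝒞.1.1).biUnion_coe.diff hV).upSet, saturated_upSet _⟩
  have hF_mono : ∀ K₁ K₂, K₁ ⊆ K₂ → F K₁ ⊆ F K₂ := fun _ _ h =>
    upSet_mono (sdiff_subset_sdiff_left (biUnion_subset_biUnion_left (inter_subset_inter_right _ h)))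
  obtain ⟨z, hzF, hzV⟩ : ∃ z ∈ ⋂₀ (F '' 𝒦), z ∉ V := by
    by_contra! hFV
    obtain ⟨_, ⟨K, hK, rfl⟩, hKV⟩ := hwf.2 (F '' 𝒦) (hne.image F)
      (by rintro _ ⟨K, hK, rfl⟩; exact hF K hK)
      (by
        rintro _ ⟨K₁, hK₁, rfl⟩ _ ⟨K₂, hK₂, rfl⟩
        obtain ⟨K₃, hK₃, h₁, h₂⟩ := hfilt K₁ hK₁ K₂ hK₂
        exact ⟨F K₃, ⟨K₃, hK₃, rfl⟩, hF_mono _ _ h₁, hF_mono _ _ h₂⟩)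
      V hV hFV
    obtain ⟨b, hb, hbV⟩ := hF_not K hK
    exact hbV (hKV hb)
  -- `z` lies in a member of `𝒞 ∩ K` for every `K`, so minimality forces `z ∈ ⋂ 𝒞`
  have hz𝒞 : 𝒞 ⊆ {B | z ∈ (B : Set X)} := by
    refine fun B hB => (h𝒞.2 ⟨h𝒞.1.1.inter (isClosed_setOf_mem z), fun K hK => ?_⟩
      inter_subset_left hB).2
    obtain ⟨b, ⟨hb, -⟩, hbz⟩ := mem_sInter.1 hzF _ ⟨K, hK, rfl⟩
    obtain ⟨B, hB, hbB⟩ := mem_iUnion₂.1 hb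
    exact ⟨B, ⟨hB.1, B.2.2.2.mem_of_specLE hbB hbz⟩, hB.2⟩
  exact hzV (hsub (mem_iInter₂.2 fun B hB => hz𝒞 hB))

theorem wellFiltered_upperVietoris (hwf : WellFiltered X) : WellFiltered (QSet X) := by
  refine ⟨t0Space, fun 𝒦 hne h𝒦 hfilt 𝒰 h𝒰 hsub => ?_⟩
  by_contra! hno
  have hcpt : ∀ K ∈ 𝒦, IsCompact K := fun K hK => (h𝒦 K hK).2.1
  obtain ⟨𝒞, h𝒞𝒰, h𝒞⟩ := exists_minimal_isClosed_inter_nonempty hcpt h𝒰.isClosed_compl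
    fun K hK => (not_subset.1 (hno K hK)).imp fun _ h => ⟨h.2, h.1⟩
  have happrox := fun V (hV : IsOpen V) => hwf.exists_subset_of_minimal hne hcpt hfilt h𝒞 hV
  set M := biInter 𝒞 happrox
  have hM𝒞 : M ∈ 𝒞 := by
    by_contra hM
    obtain ⟨V, hV, hMV, hV𝒞⟩ := exists_box_subset_of_isOpen h𝒞.1.1.isOpen_compl hM
    obtain ⟨B, hB, hBV⟩ := happrox V hV hMV
    exact hV𝒞 hBV hB
  have hM𝒦 : ∀ K ∈ 𝒦, M ∈ K := fun K hK => by
    obtain ⟨B, hB𝒞, hBK⟩ := h𝒞.1.2 K hK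
    exact (h𝒦 K hK).2.2.mem_of_specLE hBK ((specLE_iff B M).2 (biInter_subset_of_mem hB𝒞))
  exact h𝒞𝒰 hM𝒞 (hsub (mem_sInter.2 hM𝒦))

end WellFiltered

/-- if `X` is well-filtered then its Smyth power space is well-filtered,
hence a monotone convergence space; its specialization order is reverse inclusion, and
`Q(X)` is a dcpo in which directed suprema are filtered intersections. -/
theorem stmt16 {X : Type u} [TopologicalSpace X] (h : WellFiltered X) :
    @WellFiltered (QSet X) (upperVietoris X) ∧
      @MonotoneConvergenceSpace (QSet X) (upperVietoris X) ∧
      (∀ K L : QSet X, @specLE (QSet X) (upperVietoris X) K L ↔ revIncl K L) ∧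
      (∀ D : Set (QSet X), DirectedSubset (revIncl (X := X)) D →
        ∃ s : QSet X, (s : Set X) = (⋂ K ∈ D, (K : Set X)) ∧
          IsSupWrt (revIncl (X := X)) D s) :=
  ⟨h.wellFiltered_upperVietoris, h.monotoneConvergenceSpace_upperVietoris, QSet.specLE_iff,
    fun _ => h.exists_isSupWrt_revIncl⟩
end

section
/- Let X be a core compactly generated space. Then X is core compact if and only if for every core compactly generated space Y, the product topology on X × Y coincides with the core compactly generated topology of X × Y. -/
open Set TopologicalSpace

universe u

/-!
If `X` is core compact and `W ⊆ X × Y` is open in `𝒞(X × Y)`, then around `(x, y) ∈ W` choose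
`V ≪ {x' | (x', y) ∈ W}`. The set of `y'` such that `V' ×ˢ {y'} ⊆ W` for some open `V' ≫ V` is
open in `𝒞Y`: probe it with `ρ : C → Y`, pull `W` back to the core compact space `X × C`, and use
a tube lemma for `≪`. If `Y` is core compactly generated, `V ×ˢ` this set is a neighbourhood of
`(x, y)` inside `W`.

Conversely, the Scott topology of any complete lattice is core compactly generated, since it is
the quotient under `sSup` of the Scott topology on its powerset, which is core compact. For
`Y = ΣO(X)` the membership relation `{(x, U) | x ∈ U}` is open in `𝒞(X × Y)`. If it is open in
`X × Y`, a rectangle `V ×ˢ 𝒰` around `(x, U)` inside it gives `V ≪ U`, because `𝒰` is Scott open.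
-/

open scoped Topology

section FinitelyCovered

variable {Z : Type*}

def FinitelyCovered (S : Set (Set Z)) (V : Set Z) : Prop :=
  ∃ F : Finset (Set Z), ↑F ⊆ S ∧ V ⊆ ⋃₀ (F : Set (Set Z))

lemma FinitelyCovered.mono {S : Set (Set Z)} {V V' : Set Z} (h : FinitelyCovered S V)
    (hV : V' ⊆ V) : FinitelyCovered S V' :=
  let ⟨F, hFS, hVF⟩ := h; ⟨F, hFS, hV.trans hVF⟩

lemma finitelyCovered_empty (S : Set (Set Z)) : FinitelyCovered S ∅ :=
  ⟨∅, by simp, empty_subset _⟩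

lemma FinitelyCovered.union {S : Set (Set Z)} {V₁ V₂ : Set Z} (h₁ : FinitelyCovered S V₁)
    (h₂ : FinitelyCovered S V₂) : FinitelyCovered S (V₁ ∪ V₂) := by
  classical
  obtain ⟨F₁, hF₁S, hVF₁⟩ := h₁
  obtain ⟨F₂, hF₂S, hVF₂⟩ := h₂
  refine ⟨F₁ ∪ F₂, by simpa using union_subset hF₁S hF₂S, ?_⟩
  rw [Finset.coe_union, sUnion_union]
  exact union_subset_union hVF₁ hVF₂

lemma finitelyCovered_of_subset_mem {S : Set (Set Z)} {V W : Set Z} (hW : W ∈ S) (hVW : V ⊆ W) :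
    FinitelyCovered S V :=
  ⟨{W}, by simpa using hW, by simpa using hVW⟩

lemma FinitelyCovered.subset_sUnion {S : Set (Set Z)} {V : Set Z} (h : FinitelyCovered S V) :
    V ⊆ ⋃₀ S :=
  let ⟨_, hFS, hVF⟩ := h; hVF.trans (sUnion_mono hFS)

end FinitelyCovered

section WayBelow

variable {Z : Type*} [TopologicalSpace Z]

lemma wayBelow_empty (U : Set Z) : WayBelow (∅ : Set Z) U :=
  fun S _ _ => finitelyCovered_empty S

lemma WayBelow.mono_left {V' V U : Set Z} (h : WayBelow V U) (hV : V' ⊆ V) : WayBelow V' U :=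
  fun S hS hU => FinitelyCovered.mono (h S hS hU) hV

lemma WayBelow.mono_right {V U U' : Set Z} (h : WayBelow V U) (hU : U ⊆ U') : WayBelow V U' :=
  fun S hS hU' => h S hS (hU.trans hU')

lemma WayBelow.union {V₁ V₂ U : Set Z} (h₁ : WayBelow V₁ U) (h₂ : WayBelow V₂ U) :
    WayBelow (V₁ ∪ V₂) U :=
  fun S hS hU => FinitelyCovered.union (h₁ S hS hU) (h₂ S hS hU)

lemma WayBelow.subset {V U : Set Z} (h : WayBelow V U) (hU : IsOpen U) : V ⊆ U := by
  simpa using FinitelyCovered.subset_sUnion (h {U} (by simpa using hU) (by simp))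

@[elab_as_elim]
lemma WayBelow.induction_on {V U : Set Z} (h : WayBelow V U) {p : Set Z → Prop} (hempty : p ∅)
    (hmono : ∀ ⦃s t⦄, s ⊆ t → p t → p s) (hunion : ∀ ⦃s t⦄, p s → p t → p (s ∪ t))
    (hcover : ∀ x ∈ U, ∃ W, IsOpen W ∧ x ∈ W ∧ p W) : p V := by
  classical
  obtain ⟨F, hFS, hVF⟩ := h {W | IsOpen W ∧ p W} (fun W hW => hW.1) fun x hx =>
    let ⟨W, hW, hxW, hpW⟩ := hcover x hx; ⟨W, ⟨hW, hpW⟩, hxW⟩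
  refine hmono hVF ?_
  clear hVF
  induction F using Finset.induction_on with
  | empty => simpa using hempty
  | insert W F _ ih =>
    rw [Finset.coe_insert, insert_subset_iff] at hFS
    rw [Finset.coe_insert, sUnion_insert]
    exact hunion hFS.1.2 (ih hFS.2)

lemma WayBelow.exists_subset_of_directedOn {ι : Type*} {f : ι → Set Z} {D : Set ι}
    (hf : ∀ i ∈ D, IsOpen (f i)) (hne : D.Nonempty) (hD : DirectedOn (fun i j => f i ⊆ f j) D)
    {V : Set Z} (hV : WayBelow V (⋃ i ∈ D, f i)) : ∃ i ∈ D, V ⊆ f i := by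
  refine hV.induction_on ?_ ?_ ?_ ?_
  · exact let ⟨i, hi⟩ := hne; ⟨i, hi, empty_subset _⟩
  · exact fun s t hst ⟨i, hi, hti⟩ => ⟨i, hi, hst.trans hti⟩
  · rintro s t ⟨i, hi, hsi⟩ ⟨j, hj, htj⟩
    obtain ⟨k, hk, hik, hjk⟩ := hD i hi j hj
    exact ⟨k, hk, union_subset (hsi.trans hik) (htj.trans hjk)⟩
  · intro x hx
    obtain ⟨i, hi, hxi⟩ := mem_iUnion₂.1 hx
    exact ⟨f i, hf i hi, hxi, i, hi, subset_rfl⟩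

lemma CoreCompact.exists_wayBelow_wayBelow (hZ : CoreCompact Z) {V U : Set Z} (hU : IsOpen U)
    (hVU : WayBelow V U) : ∃ W, IsOpen W ∧ WayBelow V W ∧ WayBelow W U := by
  refine hVU.induction_on ?_ ?_ ?_ ?_
  · exact ⟨∅, isOpen_empty, wayBelow_empty ∅, wayBelow_empty U⟩
  · exact fun s t hst ⟨W, hW, htW, hWU⟩ => ⟨W, hW, htW.mono_left hst, hWU⟩
  · rintro s t ⟨W₁, hW₁, hsW₁, hW₁U⟩ ⟨W₂, hW₂, htW₂, hW₂U⟩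
    exact ⟨W₁ ∪ W₂, hW₁.union hW₂, (hsW₁.mono_right subset_union_left).union
      (htW₂.mono_right subset_union_right), hW₁U.union hW₂U⟩
  · intro x hx
    obtain ⟨W, hW, hxW, hWU⟩ := hZ U hU x hx
    obtain ⟨W', hW', hxW', hW'W⟩ := hZ W hW x hxW
    exact ⟨W', hW', hxW', W, hW, hW'W, hWU⟩

end WayBelow

section Product

variable {A B : Type*} [TopologicalSpace A] [TopologicalSpace B]

lemma WayBelow.exists_tube {A' A₀ : Set A} (h : WayBelow A' A₀) {S : Set (Set (A × B))}
    (hS : ∀ W ∈ S, IsOpen W) {b : B} (hb : A₀ ×ˢ {b} ⊆ ⋃₀ S) :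
    ∃ V, IsOpen V ∧ b ∈ V ∧ FinitelyCovered S (A' ×ˢ V) := by
  refine h.induction_on ?_ ?_ ?_ ?_
  · exact ⟨univ, isOpen_univ, mem_univ b, by simpa using finitelyCovered_empty S⟩
  · exact fun s t hst ⟨V, hV, hbV, htV⟩ => ⟨V, hV, hbV, htV.mono (prod_mono hst subset_rfl)⟩
  · rintro s t ⟨V₁, hV₁, hbV₁, hs⟩ ⟨V₂, hV₂, hbV₂, ht⟩
    refine ⟨V₁ ∩ V₂, hV₁.inter hV₂, ⟨hbV₁, hbV₂⟩, (hs.union ht).mono ?_⟩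
    rw [union_prod]
    exact union_subset_union (prod_mono subset_rfl inter_subset_left)
      (prod_mono subset_rfl inter_subset_right)
  · intro x hx
    obtain ⟨W, hWS, hxW⟩ := hb (mk_mem_prod hx (mem_singleton b))
    obtain ⟨u, v, hu, hv, hxu, hbv, huv⟩ := isOpen_prod_iff.1 (hS W hWS) x b hxW
    exact ⟨u, hu, hxu, v, hv, hbv, finitelyCovered_of_subset_mem hWS huv⟩

lemma WayBelow.prod {A' A₀ : Set A} {B' B₀ : Set B} (hA : WayBelow A' A₀) (hB : WayBelow B' B₀) :
    WayBelow (A' ×ˢ B') (A₀ ×ˢ B₀) := by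
  intro S hS hcover
  refine hB.induction_on (p := fun V => FinitelyCovered S (A' ×ˢ V)) ?_ ?_ ?_ ?_
  · simpa using finitelyCovered_empty S
  · exact fun s t hst ht => ht.mono (prod_mono subset_rfl hst)
  · exact fun s t hs ht => by simpa only [prod_union] using hs.union ht
  · intro b hb
    exact hA.exists_tube hS ((prod_mono subset_rfl (singleton_subset_iff.2 hb)).trans hcover)

lemma CoreCompact.prod (hA : CoreCompact A) (hB : CoreCompact B) : CoreCompact (A × B) := by
  rintro G hG ⟨a, b⟩ hab
  obtain ⟨u, v, hu, hv, hau, hbv, huv⟩ := isOpen_prod_iff.1 hG a b hab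
  obtain ⟨A', hA', haA', hA'u⟩ := hA u hu a hau
  obtain ⟨B', hB', hbB', hB'v⟩ := hB v hv b hbv
  exact ⟨A' ×ˢ B', hA'.prod hB', ⟨haA', hbB'⟩, (hA'u.prod hB'v).mono_right huv⟩

end Product

lemma ccGenerated_iff {Z : Type*} [TopologicalSpace Z] :
    CCGenerated Z ↔ ∀ V, ccgOpen Z V → IsOpen V :=
  ⟨fun h _ hV => h ▸ hV, fun h => TopologicalSpace.ext_iff.2 fun V =>
    ⟨h V, fun hV _ _ _ _ hρ => hρ.isOpen_preimage V hV⟩⟩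

section Scott

variable {α : Type*}

lemma isSupWrt_iff_isLUB [Preorder α] {D : Set α} {s : α} :
    IsSupWrt (· ≤ ·) D s ↔ IsLUB D s :=
  Iff.rfl

lemma ScottOpenWrt.exists_finite_mem {𝒱 : Set (Set α)} (h𝒱 : ScottOpenWrt (· ≤ ·) 𝒱)
    {A : Set α} (hA : A ∈ 𝒱) : ∃ F ∈ 𝒱, F.Finite ∧ F ⊆ A := by
  have hdir : DirectedSubset (· ≤ ·) {F : Set α | F.Finite ∧ F ⊆ A} :=
    ⟨⟨∅, finite_empty, empty_subset A⟩, fun F hF G hG =>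
      ⟨F ∪ G, ⟨hF.1.union hG.1, union_subset hF.2 hG.2⟩, subset_union_left, subset_union_right⟩⟩
  have hsup : IsSupWrt (· ≤ ·) {F : Set α | F.Finite ∧ F ⊆ A} A :=
    ⟨fun F hF => hF.2, fun B hB x hx => hB {x} ⟨finite_singleton x, singleton_subset_iff.2 hx⟩ rfl⟩
  obtain ⟨F, ⟨hF, hFA⟩, hF𝒱⟩ := h𝒱.2 _ hdir A hsup hA
  exact ⟨F, hF𝒱, hF, hFA⟩

/-- `{B | F ⊆ B}` for finite `F` is way below every Scott open set containing `F`. -/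
lemma coreCompact_scottTop_set : @CoreCompact (Set α) (scottTop (· ≤ ·)) := by
  intro 𝒱 h𝒱 A hA
  obtain ⟨F, hF𝒱, hF, hFA⟩ := ScottOpenWrt.exists_finite_mem h𝒱 hA
  refine ⟨{B | F ⊆ B}, ⟨fun B hB C hBC => hB.trans hBC, fun D hD s hs hFs => ?_⟩, hFA,
    fun S hS h𝒱S => ?_⟩
  · rw [isSupWrt_iff_isLUB, isLUB_iff_sSup_eq] at hs
    subst hs
    obtain ⟨d, hdD, hFd⟩ :=
      DirectedOn.exists_mem_subset_of_finite_of_subset_sUnion hD.1 hD.2 hF hFs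
    exact ⟨d, hdD, hFd⟩
  · obtain ⟨W, hWS, hFW⟩ := h𝒱S hF𝒱
    exact finitelyCovered_of_subset_mem hWS fun B hFB => (hS W hWS).1 hFW hFB

variable [CompleteLattice α]

lemma continuous_sSup_scottTop :
    Continuous[scottTop (· ≤ ·), scottTop (· ≤ ·)] (sSup : Set α → α) := by
  let _ : TopologicalSpace α := scottTop (· ≤ ·)
  let _ : TopologicalSpace (Set α) := scottTop (· ≤ ·)
  refine ⟨fun 𝒱 h𝒱 => ⟨fun A hA B hAB => h𝒱.1 hA (sSup_le_sSup hAB), ?_⟩⟩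
  intro E hE S hS hS𝒱
  rw [isSupWrt_iff_isLUB, isLUB_iff_sSup_eq] at hS
  have hdir : DirectedSubset (· ≤ ·) (sSup '' E) :=
    ⟨hE.1.image sSup, DirectedOn.mono_comp (fun _ _ => sSup_le_sSup) hE.2⟩
  have hsup : IsSupWrt (· ≤ ·) (sSup '' E) (sSup S) := by
    rw [isSupWrt_iff_isLUB, isLUB_iff_sSup_eq, ← hS, sSup_image, ← sSup_sUnion]
    rfl
  obtain ⟨_, ⟨A, hAE, rfl⟩, hA𝒱⟩ := h𝒱.2 _ hdir _ hsup hS𝒱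
  exact ⟨A, hAE, hA𝒱⟩

lemma ccGenerated_scottTop : @CCGenerated α (scottTop (· ≤ ·)) := by
  let _ : TopologicalSpace α := scottTop (· ≤ ·)
  refine ccGenerated_iff.2 fun 𝒰 h𝒰 => ?_
  have hpre : ScottOpenWrt (· ≤ ·) (sSup ⁻¹' 𝒰 : Set (Set α)) :=
    h𝒰 (Set α) (scottTop (· ≤ ·)) coreCompact_scottTop_set sSup continuous_sSup_scottTop
  refine ⟨fun a ha b hab => ?_, fun D hD s hs hs𝒰 => ?_⟩
  · have hab' : sSup {a, b} = b := by rw [sSup_pair, sup_eq_right.2 hab]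
    exact hab' ▸ hpre.1 (show sSup {a} ∈ 𝒰 by rwa [sSup_singleton])
      (singleton_subset_iff.2 (mem_insert a {b}))
  · rw [isSupWrt_iff_isLUB, isLUB_iff_sSup_eq] at hs
    have hdir : DirectedSubset (· ≤ ·) (Iic '' D) :=
      ⟨hD.1.image Iic, DirectedOn.mono_comp (fun _ _ => Iic_subset_Iic.2) hD.2⟩
    have hsup : IsSupWrt (· ≤ ·) (Iic '' D) (⋃₀ (Iic '' D)) := isLUB_sSup (Iic '' D)
    have hs' : sSup (⋃₀ (Iic '' D)) = s := by
      refine hs ▸ le_antisymm (sSup_le ?_)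
        (sSup_le_sSup fun d hd => ⟨Iic d, mem_image_of_mem _ hd, le_rfl⟩)
      rintro x ⟨_, ⟨d, hd, rfl⟩, hxd⟩
      exact le_trans hxd (le_sSup hd)
    obtain ⟨_, ⟨d, hdD, rfl⟩, hd𝒰⟩ := hpre.2 _ hdir _ hsup (show _ ∈ 𝒰 by rwa [hs'])
    exact ⟨d, hdD, (isLUB_Iic (a := d)).sSup_eq ▸ hd𝒰⟩

end Scott

section Forward

variable {X Y : Type u} [TopologicalSpace X] [TopologicalSpace Y]

lemma ccgOpen_setOf_wayBelow_prod_subset (hX : CoreCompact X) {W : Set (X × Y)}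
    (hW : ccgOpen (X × Y) W) (V : Set X) :
    ccgOpen Y {y | ∃ V', IsOpen V' ∧ WayBelow V V' ∧ V' ×ˢ {y} ⊆ W} := by
  intro C _ hC ρ hρ
  rw [isOpen_iff_forall_mem_open]
  rintro c ⟨V', hV', hVV', hV'W⟩
  obtain ⟨V'', hV'', hVV'', hV''V'⟩ := hX.exists_wayBelow_wayBelow hV' hVV'
  have hG : IsOpen (Prod.map id ρ ⁻¹' W) :=
    hW (X × C) _ (hX.prod hC) _ (continuous_id.prodMap hρ)
  obtain ⟨B, hB, hcB, hV''B⟩ := hV''V'.exists_tube (S := {Prod.map id ρ ⁻¹' W})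
    (by simpa using hG) (by
      rintro ⟨x, c'⟩ ⟨hx, rfl : c' = c⟩
      simpa using hV'W (mk_mem_prod hx (mem_singleton _)))
  have hV''BW : V'' ×ˢ B ⊆ Prod.map id ρ ⁻¹' W := by simpa using hV''B.subset_sUnion
  refine ⟨B, fun c' hc' => ⟨V'', hV'', hVV'', ?_⟩, hB, hcB⟩
  rintro ⟨x, y⟩ ⟨hx, rfl : y = ρ c'⟩
  exact hV''BW (mk_mem_prod hx hc')

lemma CoreCompact.isOpen_of_ccgOpen_prod (hX : CoreCompact X) (hY : CCGenerated Y)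
    {W : Set (X × Y)} (hW : ccgOpen (X × Y) W) : IsOpen W := by
  rw [isOpen_iff_forall_mem_open]
  rintro ⟨x, y⟩ hxy
  have hslice : IsOpen {x' | (x', y) ∈ W} := hW X _ hX (fun x' => (x', y)) (by fun_prop)
  obtain ⟨V, hV, hxV, hVslice⟩ := hX _ hslice x hxy
  have hO := ccGenerated_iff.1 hY _ (ccgOpen_setOf_wayBelow_prod_subset hX hW V)
  refine ⟨V ×ˢ _, ?_, hV.prod hO, hxV, {x' | (x', y) ∈ W}, hslice, hVslice, ?_⟩
  · rintro ⟨x', y'⟩ ⟨hx', V', hV', hVV', hV'W⟩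
    exact hV'W ⟨hVV'.subset hV' hx', rfl⟩
  · rintro ⟨x', _⟩ ⟨hx', rfl⟩
    exact hx'

lemma CoreCompact.ccGenerated_prod (hX : CoreCompact X) (hY : CCGenerated Y) :
    CCGenerated (X × Y) :=
  ccGenerated_iff.2 fun _ => hX.isOpen_of_ccgOpen_prod hY

end Forward

section Membership

variable {X : Type u} [TopologicalSpace X]

lemma isOpen_setOf_mem_of_continuous {C : Type u} [TopologicalSpace C] (hC : CoreCompact C)
    {f : C → X} (hf : Continuous f) {g : C → Opens X}
    (hg : Continuous[_, scottTop (· ≤ ·)] g) : IsOpen {c | f c ∈ g c} := by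
  let _ : TopologicalSpace (Opens X) := scottTop (· ≤ ·)
  rw [isOpen_iff_forall_mem_open]
  intro c hc
  have hP : IsOpen (f ⁻¹' g c) := (g c).isOpen.preimage hf
  obtain ⟨N, hN, hcN, hNP⟩ := hC _ hP c hc
  obtain ⟨M, hM, hNM, hMP⟩ := hC.exists_wayBelow_wayBelow hP hNP
  -- interpolating a second open set makes `𝒲` inaccessible by directed suprema
  let 𝒲 : Set (Opens X) := {a | ∃ M, IsOpen M ∧ WayBelow N M ∧ WayBelow M (f ⁻¹' a)}
  have h𝒲 : ScottOpenWrt (· ≤ ·) 𝒲 := by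
    refine ⟨fun a ⟨M, hM, hNM, hMa⟩ b hab => ⟨M, hM, hNM, hMa.mono_right (preimage_mono hab)⟩,
      fun D hD s hs ⟨M, hM, hNM, hMs⟩ => ?_⟩
    rw [isSupWrt_iff_isLUB, isLUB_iff_sSup_eq] at hs
    obtain ⟨M', hM', hNM', hM'M⟩ := hC.exists_wayBelow_wayBelow hM hNM
    have hMD : WayBelow M (⋃ a ∈ D, f ⁻¹' a) := by simpa [← hs] using hMs
    obtain ⟨d, hdD, hMd⟩ := hMD.exists_subset_of_directedOn
      (fun a _ => a.isOpen.preimage hf) hD.1 (DirectedOn.mono hD.2 fun _ _ h => preimage_mono h)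
    exact ⟨d, hdD, M', hM', hNM', hM'M.mono_right hMd⟩
  refine ⟨N ∩ g ⁻¹' 𝒲, fun c' ⟨hc'N, M', hM', hNM', hM'g⟩ => ?_,
    hN.inter (hg.isOpen_preimage 𝒲 h𝒲), hcN, M, hM, hNM, hMP⟩
  exact hM'g.subset ((g c').isOpen.preimage hf) (hNM'.subset hM' hc'N)

lemma coreCompact_of_isOpen_setOf_mem
    (h : IsOpen[instTopologicalSpaceProd (t₂ := scottTop (· ≤ ·))] {p : X × Opens X | p.1 ∈ p.2}) :
    CoreCompact X := by
  let _ : TopologicalSpace (Opens X) := scottTop (· ≤ ·)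
  let _ : TopologicalSpace (Set (Opens X)) := scottTop (· ≤ ·)
  intro U hU x hx
  obtain ⟨V, 𝒰, hV, h𝒰, hxV, hU𝒰, hV𝒰⟩ := isOpen_prod_iff.1 h x ⟨U, hU⟩ hx
  refine ⟨V, hV, hxV, fun S hS hUS => ?_⟩
  let 𝒮 : Set (Opens X) := {a | (a : Set X) ∈ S}
  have h𝒮 : sSup 𝒮 ∈ 𝒰 := h𝒰.1 hU𝒰 fun y hy => by
    obtain ⟨W, hWS, hyW⟩ := hUS hy
    exact Opens.mem_sSup.2 ⟨⟨W, hS W hWS⟩, hWS, hyW⟩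
  obtain ⟨F, hF𝒰, hF, hF𝒮⟩ :=
    ScottOpenWrt.exists_finite_mem (continuous_sSup_scottTop.isOpen_preimage 𝒰 h𝒰) h𝒮
  classical
  refine ⟨hF.toFinset.image (↑), fun W hW => ?_, fun y hy => ?_⟩
  · obtain ⟨a, ha, rfl⟩ := Finset.mem_image.1 hW
    exact hF𝒮 (hF.mem_toFinset.1 ha)
  · obtain ⟨a, ha, hya⟩ := Opens.mem_sSup.1 (hV𝒰 (mk_mem_prod hy hF𝒰))
    exact ⟨a, Finset.mem_image.2 ⟨a, hF.mem_toFinset.2 ha, rfl⟩, hya⟩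

end Membership

theorem stmt18_general {X : Type u} [tX : TopologicalSpace X] :
    CoreCompact X ↔
      ∀ (Y : Type u) (tY : TopologicalSpace Y), @CCGenerated Y tY →
        @CCGenerated (X × Y) (@instTopologicalSpaceProd X Y tX tY) := by
  refine ⟨fun hX Y _ hY => hX.ccGenerated_prod hY, fun H => coreCompact_of_isOpen_setOf_mem ?_⟩
  let _ : TopologicalSpace (Opens X) := scottTop (· ≤ ·)
  rw [← H (Opens X) _ ccGenerated_scottTop]
  exact fun C _ hC ρ hρ =>
    isOpen_setOf_mem_of_continuous hC (continuous_fst.comp hρ) (continuous_snd.comp hρ)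

/-- a core compactly generated space `X` is core compact iff for every core
compactly generated space `Y` the product topology on `X × Y` coincides with the core
compactly generated topology of `X × Y`. -/
theorem stmt18 {X : Type u} [tX : TopologicalSpace X] (hX : CCGenerated X) :
    CoreCompact X ↔
      ∀ (Y : Type u) (tY : TopologicalSpace Y), @CCGenerated Y tY →
        @CCGenerated (X × Y) (@instTopologicalSpaceProd X Y tX tY) :=
  stmt18_general (tX := tX)
end
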